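/- Let x* be a detailed-balance stationary state with consensus edge set L= (r > 0). If Σ_{(i,j)∈L=} ω_ij < 2/3 then the Jacobian r(Q= − 2Q≠) is negative definite on the complement of the constant vector (x* is stable); if max_{(i,j)∈L=} ω_ij > 2/3 then the Jacobian has a positive eigenvalue (x* is unstable). -/

import Mathlib

open Finset Matrix Polynomial
open scoped Classical

/-- Right-hand side of the dynamics `dx_i/dt = Σ_{j~i} (r(x_i-x_j) - (x_i-x_j)^3)`. -/
noncomputable def rhs {N : ℕ} (G : SimpleGraph (Fin N)) (r : ℝ) (x : Fin N → ℝ) (i : Fin N) : ℝ :=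
  ∑ j ∈ G.neighborFinset i, (r * (x i - x j) - (x i - x j) ^ 3)

/-- Graph Laplacian matrix. -/
noncomputable def lap {N : ℕ} (G : SimpleGraph (Fin N)) : Matrix (Fin N) (Fin N) ℝ :=
  fun i j => if i = j then (G.degree i : ℝ) else if G.Adj i j then -1 else 0

/-- Laplacian of the subgraph of consensus edges (edges with `x i = x j`). -/
noncomputable def lapEq {N : ℕ} (G : SimpleGraph (Fin N)) (x : Fin N → ℝ) :
    Matrix (Fin N) (Fin N) ℝ :=
  fun i j => if i = j then (((G.neighborFinset i).filter (fun k => x i = x k)).card : ℝ)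
    else if G.Adj i j ∧ x i = x j then -1 else 0

/-- Laplacian of the subgraph of dissensus edges (edges with `x i ≠ x j`). -/
noncomputable def lapNe {N : ℕ} (G : SimpleGraph (Fin N)) (x : Fin N → ℝ) :
    Matrix (Fin N) (Fin N) ℝ :=
  fun i j => if i = j then (((G.neighborFinset i).filter (fun k => x i ≠ x k)).card : ℝ)
    else if G.Adj i j ∧ x i ≠ x j then -1 else 0

/-- `Qp` is the Moore–Penrose pseudoinverse of `Q`. -/
def IsMP {N : ℕ} (Q Qp : Matrix (Fin N) (Fin N) ℝ) : Prop :=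
  Q * Qp * Q = Q ∧ Qp * Q * Qp = Qp ∧ (Q * Qp)ᵀ = Q * Qp ∧ (Qp * Q)ᵀ = Qp * Q

/-- The indicator difference vector `e_i - e_j`. -/
noncomputable def ev {N : ℕ} (i j : Fin N) : Fin N → ℝ := Pi.single i 1 - Pi.single j 1

/-- Effective resistance `ω_ij = (e_i-e_j)ᵀ Q⁺ (e_i-e_j)` given a pseudoinverse `Qp` of `Q`. -/
noncomputable def effRes {N : ℕ} (Qp : Matrix (Fin N) (Fin N) ℝ) (i j : Fin N) : ℝ :=
  ev i j ⬝ᵥ (Qp *ᵥ ev i j)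

/-- A detailed-balance state: every edge difference lies in `{0, √r, -√r}`. -/
def DetailedBalance {N : ℕ} (G : SimpleGraph (Fin N)) (r : ℝ) (x : Fin N → ℝ) : Prop :=
  ∀ i j, G.Adj i j → (x i - x j = 0 ∨ x i - x j = Real.sqrt r ∨ x i - x j = - Real.sqrt r)

/-- `M` is negative definite on the subspace orthogonal to the constant vector. -/
def NegDefOrth {N : ℕ} (M : Matrix (Fin N) (Fin N) ℝ) : Prop :=
  ∀ z : Fin N → ℝ, z ≠ 0 → ∑ k, z k = 0 → z ⬝ᵥ (M *ᵥ z) < 0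

/-- `M` has a positive eigenvalue. -/
def HasPosEig {N : ℕ} (M : Matrix (Fin N) (Fin N) ℝ) : Prop :=
  ∃ (μ : ℝ) (z : Fin N → ℝ), 0 < μ ∧ z ≠ 0 ∧ M *ᵥ z = μ • z

/-- The Jacobian of the dynamics `rhs` at a state `x`, defined entrywise via partial
derivatives. -/
noncomputable def jac {N : ℕ} (G : SimpleGraph (Fin N)) (r : ℝ) (x : Fin N → ℝ) :
    Matrix (Fin N) (Fin N) ℝ :=
  fun i j => deriv (fun t => rhs G r (Function.update x j t) i) (x j)

/-- The solution `α(t) = α₀ (α₀² - (α₀²-1) e^{-2μrt})^{-1/2}` of the Bernoulli ODE. -/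
noncomputable def alph (a0 mu r : ℝ) (t : ℝ) : ℝ :=
  a0 / Real.sqrt (a0 ^ 2 - (a0 ^ 2 - 1) * Real.exp (-(2 * mu * r * t)))

/-! The Jacobian is `r (3 Q₌ - 2 Q)`, with `Q₌` the Laplacian of the consensus subgraph.
For connected `G` the kernel of `Q` is the constants, so `z - Q⁺ Q z` is constant and
`z i - z j = (e_i - e_j) ⬝ Q⁺ (Q z)`; Cauchy–Schwarz for the positive semidefinite `Q⁺` then
gives `(z i - z j)² ≤ ω_ij · zᵀ Q z`. Summing over consensus edges,
`zᵀ Q₌ z ≤ (½ Σ ω) zᵀ Q z < (2/3) zᵀ Q z` whenever `z ≠ 0` is orthogonal to the constants.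
Conversely, for a consensus edge with `ω_ij > 2/3` the vector `z = Q⁺ (e_i - e_j)` satisfies
`zᵀ Q z = ω_ij = z i - z j`, so `zᵀ (3 Q₌ - 2 Q) z ≥ 3 ω_ij² - 2 ω_ij > 0`, and a symmetric
matrix with a positive value of its quadratic form has a positive eigenvalue. -/

open SimpleGraph

namespace Matrix

variable {n : Type*} [Fintype n]

theorem IsSymm.mulVec_dotProduct {A : Matrix n n ℝ} (hA : A.IsSymm) (u w : n → ℝ) :
    (A *ᵥ u) ⬝ᵥ w = u ⬝ᵥ (A *ᵥ w) := by
  rw [dotProduct_mulVec, ← vecMul_transpose, hA.eq]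

theorem PosSemidef.dotProduct_mulVec_sq_le {B : Matrix n n ℝ} (hB : B.PosSemidef)
    (u w : n → ℝ) : (u ⬝ᵥ (B *ᵥ w)) ^ 2 ≤ (u ⬝ᵥ (B *ᵥ u)) * (w ⬝ᵥ (B *ᵥ w)) := by
  have hswap : w ⬝ᵥ (B *ᵥ u) = u ⬝ᵥ (B *ᵥ w) := by
    rw [← (isHermitian_iff_isSymm.mp hB.isHermitian).mulVec_dotProduct, dotProduct_comm]
  have hquad : ∀ t : ℝ,
      0 ≤ (w ⬝ᵥ (B *ᵥ w)) * (t * t) + 2 * (u ⬝ᵥ (B *ᵥ w)) * t + u ⬝ᵥ (B *ᵥ u) := by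
    intro t
    have h := hB.dotProduct_mulVec_nonneg (u + t • w)
    simp only [star_trivial, mulVec_add, mulVec_smul, dotProduct_add, add_dotProduct,
      dotProduct_smul, smul_dotProduct, smul_eq_mul, hswap] at h
    linarith
  have := discrim_le_zero hquad
  rw [discrim] at this
  linarith

theorem IsHermitian.exists_pos_eigenvalue {A : Matrix n n ℝ} (hA : A.IsHermitian) {z : n → ℝ}
    (hz : 0 < z ⬝ᵥ (A *ᵥ z)) : ∃ (μ : ℝ) (v : n → ℝ), 0 < μ ∧ v ≠ 0 ∧ A *ᵥ v = μ • v := by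
  classical
  by_contra! hA_nonpos
  have hnegA : (-A).PosSemidef := by
    rw [hA.neg.posSemidef_iff_eigenvalues_nonneg]
    intro i
    by_contra! hi
    have hv := hA.neg.mulVec_eigenvectorBasis i
    rw [neg_mulVec, neg_eq_iff_eq_neg, ← neg_smul] at hv
    exact hA_nonpos _ _ (by simpa using hi)
      (by simpa using hA.neg.eigenvectorBasis.orthonormal.ne_zero i) hv
  have := hnegA.dotProduct_mulVec_nonneg z
  rw [star_trivial, neg_mulVec, dotProduct_neg] at this
  linarith

theorem dotProduct_smul_sub_smul_mulVec (r a b : ℝ) (A B : Matrix n n ℝ) (z : n → ℝ) :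
    z ⬝ᵥ ((r • (a • A - b • B)) *ᵥ z) = r * (a * (z ⬝ᵥ (A *ᵥ z)) - b * (z ⬝ᵥ (B *ᵥ z))) := by
  simp only [smul_mulVec, sub_mulVec, dotProduct_smul, dotProduct_sub, smul_eq_mul]

end Matrix

variable {N : ℕ}

theorem IsMP.isSymm {Q Qp : Matrix (Fin N) (Fin N) ℝ} (h : IsMP Q Qp) (hQ : Q.IsSymm) :
    Qp.IsSymm := by
  obtain ⟨hQQpQ, hQpQQp, hQQp, hQpQ⟩ := h
  have hQpT_Q : Qpᵀ * Q = Q * Qp := by rw [← hQQp, transpose_mul, hQ.eq]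
  have hQ_QpT : Q * Qpᵀ = Qp * Q := by rw [← hQpQ, transpose_mul, hQ.eq]
  have hQ_QpT_Q : Q * Qpᵀ * Q = Q := by
    simpa only [transpose_mul, hQ.eq, Matrix.mul_assoc] using congrArg transpose hQQpQ
  have hQ_QpT' : Q * Qpᵀ = Q * Qp :=
    calc Q * Qpᵀ = Qp * (Q * Qpᵀ * Q) := by rw [hQ_QpT_Q, hQ_QpT]
      _ = (Qp * Q) * (Qpᵀ * Q) := by simp only [Matrix.mul_assoc]
      _ = (Q * Qpᵀ) * (Q * Qp) := by rw [hQ_QpT, hQpT_Q]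
      _ = Q * Qp := by rw [← Matrix.mul_assoc, hQ_QpT_Q]
  have hcomm : Q * Qp = Qp * Q := hQ_QpT'.symm.trans hQ_QpT
  show Qpᵀ = Qp
  calc Qpᵀ = Qpᵀ * Q * Qpᵀ := by
        simpa only [transpose_mul, hQ.eq, Matrix.mul_assoc] using (congrArg transpose hQpQQp).symm
    _ = Qp * Q * Qpᵀ := by rw [hQpT_Q, hcomm]
    _ = Qp * (Q * Qp) := by rw [Matrix.mul_assoc, hQ_QpT']
    _ = Qp := by rw [← Matrix.mul_assoc, hQpQQp]

theorem IsMP.posSemidef {Q Qp : Matrix (Fin N) (Fin N) ℝ} (h : IsMP Q Qp) (hQ : Q.PosSemidef) :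
    Qp.PosSemidef := by
  have hQp := h.isSymm (isHermitian_iff_isSymm.mp hQ.isHermitian)
  rw [← h.2.1]
  simpa only [conjTranspose_eq_transpose_of_trivial, hQp.eq] using hQ.conjTranspose_mul_mul_same Qp

def consensusGraph {V : Type*} (G : SimpleGraph V) (x : V → ℝ) : SimpleGraph V where
  Adj i j := G.Adj i j ∧ x i = x j
  symm := ⟨fun _ _ h => ⟨h.1.symm, h.2.symm⟩⟩
  loopless := ⟨fun _ h => G.irrefl h.1⟩

@[simp]
theorem consensusGraph_adj {V : Type*} (G : SimpleGraph V) (x : V → ℝ) (i j : V) :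
    (consensusGraph G x).Adj i j ↔ G.Adj i j ∧ x i = x j :=
  Iff.rfl

theorem lap_eq_lapMatrix (G : SimpleGraph (Fin N)) : lap G = G.lapMatrix ℝ := by
  ext i j
  by_cases h : i = j
  · subst h; simp [lap, lapMatrix, degMatrix]
  · by_cases ha : G.Adj i j <;> simp [lap, lapMatrix, degMatrix, h, ha]

theorem lapEq_eq_lapMatrix (G : SimpleGraph (Fin N)) (x : Fin N → ℝ) :
    lapEq G x = (consensusGraph G x).lapMatrix ℝ := by
  ext i j
  by_cases h : i = j
  · subst h
    have : (consensusGraph G x).neighborFinset i = (G.neighborFinset i).filter (x i = x ·) := by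
      ext; simp
    simp [lapEq, lapMatrix, degMatrix, ← card_neighborFinset_eq_degree, this]
  · simp only [lapEq, lapMatrix, degMatrix, if_neg h, Matrix.sub_apply, diagonal_apply_ne _ h,
      adjMatrix_apply, consensusGraph_adj]
    split_ifs <;> norm_num

theorem lap_eq_lapEq_add_lapNe (G : SimpleGraph (Fin N)) (x : Fin N → ℝ) :
    lap G = lapEq G x + lapNe G x := by
  ext i j
  by_cases h : i = j
  · subst h
    simp only [lap, lapEq, lapNe, if_true, Matrix.add_apply]
    rw [← Nat.cast_add, Finset.card_filter_add_card_filter_not, card_neighborFinset_eq_degree]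
  · by_cases ha : G.Adj i j
    · by_cases hx : x i = x j <;> simp [lap, lapEq, lapNe, h, ha, hx]
    · simp [lap, lapEq, lapNe, h, ha]

namespace SimpleGraph

variable {V : Type*} [Fintype V] [DecidableEq V]

theorem sq_sub_le_dotProduct_lapMatrix_mulVec (H : SimpleGraph V) [DecidableRel H.Adj] {i j : V}
    (hij : H.Adj i j) (z : V → ℝ) : (z i - z j) ^ 2 ≤ z ⬝ᵥ (H.lapMatrix ℝ *ᵥ z) := by
  set f : V → V → ℝ := fun a b => if H.Adj a b then (z a - z b) ^ 2 else 0
  have hf : ∀ a b, 0 ≤ f a b := fun a b => by dsimp only [f]; split_ifs <;> positivity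
  have hrow : ∀ a b, f a b ≤ ∑ c, f a c := fun a b =>
    Finset.single_le_sum (fun c _ => hf a c) (Finset.mem_univ b)
  have hpair : ∑ c, f i c + ∑ c, f j c ≤ ∑ a, ∑ c, f a c :=
    Finset.add_le_sum (fun a _ => Finset.sum_nonneg fun c _ => hf a c) (Finset.mem_univ i)
      (Finset.mem_univ j) hij.ne
  have hfij : f i j = (z i - z j) ^ 2 := if_pos hij
  have hfji : f j i = (z i - z j) ^ 2 := by simp only [f, if_pos hij.symm]; ring
  rw [← toLinearMap₂'_apply', lapMatrix_toLinearMap₂']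
  linarith [hrow i j, hrow j i]

theorem Connected.dotProduct_lapMatrix_mulVec_pos {G : SimpleGraph V} [DecidableRel G.Adj]
    (hG : G.Connected) {z : V → ℝ} (hz : z ≠ 0) (hsum : ∑ k, z k = 0) :
    0 < z ⬝ᵥ (G.lapMatrix ℝ *ᵥ z) := by
  refine lt_of_le_of_ne (by simpa using (posSemidef_lapMatrix ℝ G).dotProduct_mulVec_nonneg z)
    fun h => hz ?_
  rw [← toLinearMap₂'_apply'] at h
  have hconst := (lapMatrix_toLinearMap₂'_apply'_eq_zero_iff_forall_reachable G z).1 h.symm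
  obtain ⟨i₀⟩ := hG.nonempty
  have hzi₀ : z i₀ = 0 := by
    have : (Fintype.card V : ℝ) * z i₀ = 0 := by
      rw [← hsum, Finset.sum_congr rfl fun k _ => hconst k i₀ (hG.preconnected k i₀)]
      simp
    exact (mul_eq_zero.1 this).resolve_left
      (Nat.cast_ne_zero.2 (Fintype.card_pos_iff.2 hG.nonempty).ne')
  funext k
  rw [hconst k i₀ (hG.preconnected k i₀), hzi₀, Pi.zero_apply]

end SimpleGraph

theorem ev_dotProduct (i j : Fin N) (z : Fin N → ℝ) : ev i j ⬝ᵥ z = z i - z j := by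
  simp [ev, sub_dotProduct, single_dotProduct]

section EffectiveResistance

variable {G : SimpleGraph (Fin N)} [DecidableRel G.Adj] {Qp : Matrix (Fin N) (Fin N) ℝ}

theorem sub_eq_ev_dotProduct_pinv_mulVec (hG : G.Connected) (hQp : IsMP (G.lapMatrix ℝ) Qp)
    (z : Fin N → ℝ) (i j : Fin N) :
    z i - z j = ev i j ⬝ᵥ (Qp *ᵥ (G.lapMatrix ℝ *ᵥ z)) := by
  have hker : G.lapMatrix ℝ *ᵥ (z - Qp *ᵥ (G.lapMatrix ℝ *ᵥ z)) = 0 := by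
    rw [mulVec_sub, mulVec_mulVec, mulVec_mulVec, hQp.1, sub_self]
  have := (lapMatrix_mulVec_eq_zero_iff_forall_reachable G).1 hker i j (hG.preconnected i j)
  rw [ev_dotProduct]
  simp only [Pi.sub_apply] at this
  linarith

theorem sq_sub_le_effRes_mul (hG : G.Connected) (hQp : IsMP (G.lapMatrix ℝ) Qp)
    (z : Fin N → ℝ) (i j : Fin N) :
    (z i - z j) ^ 2 ≤ effRes Qp i j * (z ⬝ᵥ (G.lapMatrix ℝ *ᵥ z)) := by
  have hL := isHermitian_iff_isSymm.mp (isHermitian_lapMatrix ℝ G)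
  have hLz :
      (G.lapMatrix ℝ *ᵥ z) ⬝ᵥ (Qp *ᵥ (G.lapMatrix ℝ *ᵥ z)) = z ⬝ᵥ (G.lapMatrix ℝ *ᵥ z) := by
    rw [hL.mulVec_dotProduct, mulVec_mulVec, mulVec_mulVec, hQp.1]
  rw [sub_eq_ev_dotProduct_pinv_mulVec hG hQp, effRes, ← hLz]
  exact (hQp.posSemidef (posSemidef_lapMatrix ℝ G)).dotProduct_mulVec_sq_le _ _

theorem dotProduct_lapMatrix_mulVec_pinv_ev (hQp : IsMP (G.lapMatrix ℝ) Qp) (i j : Fin N) :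
    (Qp *ᵥ ev i j) ⬝ᵥ (G.lapMatrix ℝ *ᵥ (Qp *ᵥ ev i j)) = effRes Qp i j := by
  have hQpSymm := hQp.isSymm (isHermitian_iff_isSymm.mp (isHermitian_lapMatrix ℝ G))
  rw [hQpSymm.mulVec_dotProduct, mulVec_mulVec, mulVec_mulVec, hQp.2.1, effRes]

end EffectiveResistance

theorem dotProduct_lapEq_mulVec (G : SimpleGraph (Fin N)) (x z : Fin N → ℝ) :
    z ⬝ᵥ (lapEq G x *ᵥ z) =
      1 / 2 * ∑ i, ∑ j ∈ (G.neighborFinset i).filter (fun j => x i = x j), (z i - z j) ^ 2 := by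
  rw [lapEq_eq_lapMatrix, ← toLinearMap₂'_apply', lapMatrix_toLinearMap₂']
  simp only [consensusGraph_adj, ite_and, neighborFinset_eq_filter, sum_filter]
  ring

theorem dotProduct_lapEq_mulVec_le {G : SimpleGraph (Fin N)} (hG : G.Connected)
    {Qp : Matrix (Fin N) (Fin N) ℝ} (hQp : IsMP (G.lapMatrix ℝ) Qp) (x z : Fin N → ℝ) :
    z ⬝ᵥ (lapEq G x *ᵥ z) ≤
      (1 / 2 * ∑ i, ∑ j ∈ (G.neighborFinset i).filter (fun j => x i = x j), effRes Qp i j) *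
        (z ⬝ᵥ (G.lapMatrix ℝ *ᵥ z)) := by
  rw [dotProduct_lapEq_mulVec, mul_assoc, Finset.sum_mul]
  gcongr with i
  rw [Finset.sum_mul]
  gcongr with j
  exact sq_sub_le_effRes_mul hG hQp z i j

theorem lapEq_sub_two_smul_lapNe (G : SimpleGraph (Fin N)) (x : Fin N → ℝ) :
    lapEq G x - (2 : ℝ) • lapNe G x = (3 : ℝ) • lapEq G x - (2 : ℝ) • G.lapMatrix ℝ := by
  rw [← lap_eq_lapMatrix, lap_eq_lapEq_add_lapNe]
  module

theorem isHermitian_lapEq (G : SimpleGraph (Fin N)) (x : Fin N → ℝ) : (lapEq G x).IsHermitian :=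
  lapEq_eq_lapMatrix G x ▸ isHermitian_lapMatrix ℝ _

/-- Each consensus edge appears twice among the ordered pairs `(i, j)`, whence the factor
`1/2`. -/
theorem stmt_10_general {N : ℕ} (G : SimpleGraph (Fin N)) (hG : G.Connected) (r : ℝ) (hr : 0 < r)
    (x : Fin N → ℝ)
    (Qp : Matrix (Fin N) (Fin N) ℝ) (hQp : IsMP (lap G) Qp) :
    ((1 / 2 : ℝ) * ∑ i, ∑ j ∈ (G.neighborFinset i).filter (fun j => x i = x j),
        effRes Qp i j < 2 / 3 →
      NegDefOrth (r • (lapEq G x - (2 : ℝ) • lapNe G x))) ∧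
    ((∃ i j, G.Adj i j ∧ x i = x j ∧ 2 / 3 < effRes Qp i j) →
      HasPosEig (r • (lapEq G x - (2 : ℝ) • lapNe G x))) := by
  rw [lap_eq_lapMatrix] at hQp
  rw [lapEq_sub_two_smul_lapNe]
  have hform := dotProduct_smul_sub_smul_mulVec r 3 2 (lapEq G x) (G.lapMatrix ℝ)
  refine ⟨fun hsum z hz hz0 => ?_, fun ⟨i, j, hadj, hxij, hω⟩ => ?_⟩
  · have hpos := hG.dotProduct_lapMatrix_mulVec_pos hz hz0
    have hle := dotProduct_lapEq_mulVec_le hG hQp x z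
    rw [hform]
    exact mul_neg_of_pos_of_neg hr (by nlinarith)
  · set z := Qp *ᵥ ev i j
    have hzL := dotProduct_lapMatrix_mulVec_pinv_ev hQp i j
    have hzE : effRes Qp i j ^ 2 ≤ z ⬝ᵥ (lapEq G x *ᵥ z) := by
      have := sq_sub_le_dotProduct_lapMatrix_mulVec (consensusGraph G x) ⟨hadj, hxij⟩ z
      rwa [← ev_dotProduct, ← lapEq_eq_lapMatrix] at this
    have hJ := (((isHermitian_lapEq G x).smul (.all (3 : ℝ))).sub
      ((isHermitian_lapMatrix ℝ G).smul (.all (2 : ℝ)))).smul (.all r)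
    refine hJ.exists_pos_eigenvalue (z := z) ?_
    rw [hform, hzL]
    exact mul_pos hr (by nlinarith)

/-- mixed stationary state stability: sum of effective resistances of
consensus edges below `2/3` implies stability; a consensus edge with effective resistance
above `2/3` implies instability. (Each consensus edge appears twice among ordered pairs,
whence the factor `1/2`.) -/
theorem stmt_10 {N : ℕ} (G : SimpleGraph (Fin N)) (hG : G.Connected) (r : ℝ) (hr : 0 < r)
    (x : Fin N → ℝ) (hx : DetailedBalance G r x)
    (Qp : Matrix (Fin N) (Fin N) ℝ) (hQp : IsMP (lap G) Qp) :
    ((1 / 2 : ℝ) * ∑ i, ∑ j ∈ (G.neighborFinset i).filter (fun j => x i = x j),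
        effRes Qp i j < 2 / 3 →
      NegDefOrth (r • (lapEq G x - (2 : ℝ) • lapNe G x))) ∧
    ((∃ i j, G.Adj i j ∧ x i = x j ∧ 2 / 3 < effRes Qp i j) →
      HasPosEig (r • (lapEq G x - (2 : ℝ) • lapNe G x))) :=
  stmt_10_general G hG r hr x Qp hQp
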